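/- Define, for 3×3 matrices, A ⋆ B ⋆ C = ABC - a_{11}BC - b_{22}CA - c_{33}AB + (a_{11}b_{22} - a_{21}b_{12})C + (b_{22}c_{33} - b_{32}c_{23})A + (a_{11}c_{33} - a_{31}c_{13})B - det(col₁A, col₂B, col₃C)·1. Then the sum of A ⋆ B ⋆ C over all 6 permutations of the roles of A, B, C vanishes; equivalently, s(A) ⋆ s(B) ⋆ s(C) summed over all bijections s equals 0 (total antisymmetrization of the Cayley–Hamilton trilinear form). -/

import Mathlib

open Matrix

/-- `det(col₁A, col₂B, col₃C)` for 3×3 matrices. -/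
def mixedDet {R : Type*} [CommRing R] (A B C : Matrix (Fin 3) (Fin 3) R) : R :=
  ((A.updateCol 1 fun i => B i 1).updateCol 2 fun i => C i 2).det

/-- The trilinear Cayley–Hamilton form for 3×3 matrices. -/
def star3 {R : Type*} [CommRing R] (A B C : Matrix (Fin 3) (Fin 3) R) :
    Matrix (Fin 3) (Fin 3) R :=
  A * B * C - A 0 0 • (B * C) - B 1 1 • (C * A) - C 2 2 • (A * B)
    + (A 0 0 * B 1 1 - A 1 0 * B 0 1) • C
    + (B 1 1 * C 2 2 - B 2 1 * C 1 2) • A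
    + (A 0 0 * C 2 2 - A 2 0 * C 0 2) • B
    - mixedDet A B C • (1 : Matrix (Fin 3) (Fin 3) R)

set_option maxHeartbeats 4000000 in
/-- The total antisymmetrization of the Cayley–Hamilton trilinear form vanishes. -/
theorem stmt_18 {R : Type*} [CommRing R] (A B C : Matrix (Fin 3) (Fin 3) R) :
    star3 A B C + star3 A C B + star3 B A C + star3 B C A + star3 C A B +
      star3 C B A = 0 := by
  ext i j
  fin_cases i <;> fin_cases j <;>
    simp [star3, mixedDet, det_fin_three, mul_apply, Fin.sum_univ_succ,
      updateCol_apply, Matrix.one_apply] <;> ring
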